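/- Let I ⊂ S = K[x_1,…,x_n] be a monomial complete intersection ideal minimally generated by 3 monomials. Then sdepth I = n − 1. -/

import Mathlib

/-!
The exponents of the monomials of `I = (x^a, x^b, x^c)` form `Ici a ∪ Ici b ∪ Ici c`, and a
Stanley decomposition of `I` amounts to a partition of this set into Stanley sets `u + ℕ^Z`.
The set splits as `Ici (a ⊔ b ⊔ c) ∪ (Ici a \ Ici c) ∪ (Ici b \ Ici a) ∪ (Ici c \ Ici b)`, and for
coprime `q, p` the difference `Ici q \ Ici p` is the disjoint union of the strips
`{e ≥ q | e j = t, p i ≤ e i for i < j}` with `t < p j`, each a Stanley set with `|Z| = n - 1`.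
Hence `sdepth I ≥ n - 1`. Conversely, if every `Z` is full, the Stanley sets are disjoint cones
`Ici u`; the cones through `a` and `b` share `a ⊔ b`, so they coincide and their apex lies below
`a ⊓ b = 0`, which would put `1` in `I`.
-/

open MvPolynomial

namespace StanleyPaper

variable {n : ℕ} {K : Type} [Field K]

/-- A monomial ideal: an ideal generated by monomials. -/
def IsMonomialIdeal (I : Ideal (MvPolynomial (Fin n) K)) : Prop :=
  ∃ A : Set (Fin n →₀ ℕ),
    I = Ideal.span ((fun a => (monomial a (1 : K) : MvPolynomial (Fin n) K)) '' A)

/-- The set of exponent vectors `a` with `x^a ∈ I \ J`. -/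
def expSet (I J : Ideal (MvPolynomial (Fin n) K)) : Set (Fin n →₀ ℕ) :=
  {a | (monomial a (1 : K) : MvPolynomial (Fin n) K) ∈ I ∧
    (monomial a (1 : K) : MvPolynomial (Fin n) K) ∉ J}

/-- The characteristic poset `P^g_{I/J}` of `I/J` with respect to `g`. -/
def charPoset (I J : Ideal (MvPolynomial (Fin n) K)) (g : Fin n →₀ ℕ) : Set (Fin n →₀ ℕ) :=
  {a | a ∈ expSet I J ∧ a ≤ g}

/-- `Z_b = { x_j : b(j) = g(j) }`. -/
def Zset (g b : Fin n →₀ ℕ) : Finset (Fin n) :=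
  Finset.univ.filter fun j => b j = g j

/-- `ρ(b) = |Z_b|`. -/
def rho (g b : Fin n →₀ ℕ) : ℕ := (Zset g b).card

/-- The Stanley space `x^c K[Z]`, as a `K`-subspace of `S = K[x_1,…,x_n]`. -/
noncomputable def stanleySpace (K : Type) [Field K] (c : Fin n →₀ ℕ) (Z : Finset (Fin n)) :
    Submodule K (MvPolynomial (Fin n) K) :=
  Submodule.span K
    ((fun a => (monomial a (1 : K) : MvPolynomial (Fin n) K)) ''
      {a | c ≤ a ∧ ∀ j ∉ Z, a j = c j})

/-- The `K`-span of the monomials of `I \ J`; this is the standard model for the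
`ℤⁿ`-graded `K`-vector space `I/J`. -/
noncomputable def quotSpace (I J : Ideal (MvPolynomial (Fin n) K)) : Submodule K (MvPolynomial (Fin n) K) :=
  Submodule.span K ((fun a => (monomial a (1 : K) : MvPolynomial (Fin n) K)) '' expSet I J)

/-- The `K`-span of the monomials of `J`. -/
noncomputable def Jspan (J : Ideal (MvPolynomial (Fin n) K)) : Submodule K (MvPolynomial (Fin n) K) :=
  Submodule.span K ((fun a => (monomial a (1 : K) : MvPolynomial (Fin n) K)) ''
    {a | (monomial a (1 : K) : MvPolynomial (Fin n) K) ∈ J})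

/-- A (graded) `K`-subspace `W` of the model of `I/J` corresponds to an (`ℤⁿ`-graded)
`S`-submodule of `I/J` iff it is stable under multiplication by the variables, modulo `J`. -/
def IsSSubmoduleModJ (J : Ideal (MvPolynomial (Fin n) K))
    (W : Submodule K (MvPolynomial (Fin n) K)) : Prop :=
  ∀ j : Fin n, ∀ p ∈ W, (X j : MvPolynomial (Fin n) K) * p ∈ W ⊔ Jspan J

/-- A partition of a (finite) subposet `P` of `ℕⁿ` into intervals `[c i, d i]`. -/
structure IntervalPartition (P : Set (Fin n →₀ ℕ)) where
  r : ℕ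
  c : Fin r → (Fin n →₀ ℕ)
  d : Fin r → (Fin n →₀ ℕ)
  le : ∀ i, c i ≤ d i
  mem_c : ∀ i, c i ∈ P
  mem_d : ∀ i, d i ∈ P
  sub : ∀ i, Set.Icc (c i) (d i) ⊆ P
  cover : ∀ a ∈ P, ∃ i, a ∈ Set.Icc (c i) (d i)
  disj : ∀ i j, i ≠ j → Disjoint (Set.Icc (c i) (d i)) (Set.Icc (c j) (d j))

/-- The inner index set of the `i`-th interval: all `c' ∈ [c i, d i]` with
`c'(j) = c i (j)` for all `j` with `x_j ∈ Z_{d i}`. -/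
def IntervalPartition.innerSet {P : Set (Fin n →₀ ℕ)} (Pt : IntervalPartition P)
    (g : Fin n →₀ ℕ) (i : Fin Pt.r) : Set (Fin n →₀ ℕ) :=
  {c' | c' ∈ Set.Icc (Pt.c i) (Pt.d i) ∧ ∀ j ∈ Zset g (Pt.d i), c' j = Pt.c i j}

/-- The index set of the Stanley decomposition `D(Pt)` associated to a partition `Pt`. -/
def IntervalPartition.DPIdx {P : Set (Fin n →₀ ℕ)} (Pt : IntervalPartition P)
    (g : Fin n →₀ ℕ) : Type :=
  Σ i : Fin Pt.r, Pt.innerSet g i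

/-- The family of Stanley spaces of the decomposition `D(Pt)`:
the summand at `(i, c')` is `x^{c'} K[Z_{d i}]`. -/
noncomputable def IntervalPartition.DPfam (K : Type) [Field K] {P : Set (Fin n →₀ ℕ)}
    (Pt : IntervalPartition P) (g : Fin n →₀ ℕ) (x : Pt.DPIdx g) :
    Submodule K (MvPolynomial (Fin n) K) :=
  stanleySpace K (x.2 : Fin n →₀ ℕ) (Zset g (Pt.d x.1))

/-- `sdepth D(Pt) = min { ρ(d i) }`. -/
noncomputable def IntervalPartition.sdepthDP {P : Set (Fin n →₀ ℕ)} (Pt : IntervalPartition P)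
    (g : Fin n →₀ ℕ) : ℕ :=
  sInf {k | ∃ i : Fin Pt.r, k = rho g (Pt.d i)}

/-- The property that the partial unions `⋃_{i < t} [c i, d i]` are poset ideals
of the characteristic poset, for all `t`. -/
def IntervalPartition.InitialsArePosetIdeals {P : Set (Fin n →₀ ℕ)}
    (Pt : IntervalPartition P) : Prop :=
  ∀ t : ℕ, ∀ a b : Fin n →₀ ℕ,
    (∃ i : Fin Pt.r, (i : ℕ) < t ∧ a ∈ Set.Icc (Pt.c i) (Pt.d i)) → b ∈ P → b ≤ a →
      ∃ i : Fin Pt.r, (i : ℕ) < t ∧ b ∈ Set.Icc (Pt.c i) (Pt.d i)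

/-- The family `(x^{u i} K[Z i])_{i : ι}` is a Stanley decomposition of `I/J`:
each Stanley space is a free `K[Z i]`-module (its natural monomial basis is
`K`-linearly independent), the spaces are independent, and they sum to `I/J`. -/
def IsStanleyDecompOf (I J : Ideal (MvPolynomial (Fin n) K)) {ι : Type}
    (u : ι → (Fin n →₀ ℕ)) (Z : ι → Finset (Fin n)) : Prop :=
  (∀ i, LinearIndependent K fun e : {e : Fin n →₀ ℕ // ∀ j ∉ Z i, e j = 0} =>
    (monomial (u i + (e : Fin n →₀ ℕ)) (1 : K) : MvPolynomial (Fin n) K)) ∧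
  iSupIndep (fun i => stanleySpace K (u i) (Z i)) ∧
  (⨆ i, stanleySpace K (u i) (Z i)) = quotSpace I J

/-- A (finite) Stanley decomposition of `I/J`. -/
structure StanleyDec (I J : Ideal (MvPolynomial (Fin n) K)) where
  m : ℕ
  u : Fin m → (Fin n →₀ ℕ)
  Z : Fin m → Finset (Fin n)
  isDecomp : IsStanleyDecompOf I J u Z

/-- The Stanley depth of a Stanley decomposition: `min |Z i|`. -/
noncomputable def StanleyDec.sdepth {I J : Ideal (MvPolynomial (Fin n) K)} (D : StanleyDec I J) : ℕ :=
  sInf {k | ∃ i, k = (D.Z i).card}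

/-- The Stanley depth of `I/J`. -/
noncomputable def sdepthQ (I J : Ideal (MvPolynomial (Fin n) K)) : ℕ :=
  sSup {k | ∃ D : StanleyDec I J, k = D.sdepth}

/-- A Stanley decomposition of `I/J` is induced by a prime filtration iff its Stanley
spaces can be ordered so that all partial sums are (`ℤⁿ`-graded) `S`-submodules of `I/J`. -/
def StanleyDec.InducedByPrimeFiltration {I J : Ideal (MvPolynomial (Fin n) K)}
    (D : StanleyDec I J) : Prop :=
  ∃ σ : Equiv.Perm (Fin D.m), ∀ t : ℕ,
    IsSSubmoduleModJ J
      (⨆ i : Fin D.m, ⨆ _ : (σ i : ℕ) < t, stanleySpace K (D.u i) (D.Z i))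

/-- `D(Pt)` is induced by a prime filtration: its Stanley spaces can be ordered so that
all partial sums are (`ℤⁿ`-graded) `S`-submodules of `I/J`. -/
def IntervalPartition.DPInducedByPrimeFiltration (J : Ideal (MvPolynomial (Fin n) K))
    {P : Set (Fin n →₀ ℕ)} (Pt : IntervalPartition P) (g : Fin n →₀ ℕ) : Prop :=
  ∃ (N : ℕ) (e : Fin N → Pt.DPIdx g), Function.Bijective e ∧ ∀ t : ℕ,
    IsSSubmoduleModJ J (⨆ s : Fin N, ⨆ _ : (s : ℕ) < t, Pt.DPfam K g (e s))

/-- A monomial prime ideal: an ideal generated by a subset of the variables. -/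
def IsMonomialPrime (P : Ideal (MvPolynomial (Fin n) K)) : Prop :=
  ∃ V : Finset (Fin n), P = Ideal.span ((fun j => (X j : MvPolynomial (Fin n) K)) '' ↑V)

/-- A prime filtration of `I/J` (in the monomial model): a chain
`0 = W 0 ⊂ W 1 ⊂ ⋯ ⊂ W m = I/J` of `ℤⁿ`-graded `S`-submodules of `I/J` such that
`W (i+1) / W i ≅ (S/P i)(-a i)` with `P i` a monomial prime ideal. -/
structure QPrimeFiltration (I J : Ideal (MvPolynomial (Fin n) K)) where
  m : ℕ
  W : Fin (m + 1) → Submodule K (MvPolynomial (Fin n) K)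
  a : Fin m → (Fin n →₀ ℕ)
  P : Fin m → Ideal (MvPolynomial (Fin n) K)
  bot : W 0 = ⊥
  top : W (Fin.last m) = quotSpace I J
  graded : ∀ i, ∃ E : Set (Fin n →₀ ℕ),
    W i = Submodule.span K ((fun a => (monomial a (1 : K) : MvPolynomial (Fin n) K)) '' E)
  stable : ∀ i, IsSSubmoduleModJ J (W i)
  amem : ∀ i, a i ∈ expSet I J
  gen : ∀ i, W i.succ = W i.castSucc ⊔
    Submodule.span K ((fun e => (monomial e (1 : K) : MvPolynomial (Fin n) K)) ''
      {e | a i ≤ e ∧ (monomial e (1 : K) : MvPolynomial (Fin n) K) ∉ J})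
  ann : ∀ i, ∀ s : MvPolynomial (Fin n) K,
    s * monomial (a i) (1 : K) ∈ W i.castSucc ⊔ Jspan J ↔ s ∈ P i
  isPrime : ∀ i, IsMonomialPrime (P i)

/-- `fdepth ℱ = min { dim S/P : P ∈ supp ℱ }`. -/
noncomputable def QPrimeFiltration.fdepth {I J : Ideal (MvPolynomial (Fin n) K)}
    (F : QPrimeFiltration I J) : WithBot ℕ∞ :=
  ⨅ i : Fin F.m, ringKrullDim (MvPolynomial (Fin n) K ⧸ F.P i)

/-- `fdepth I/J = max { fdepth ℱ : ℱ a prime filtration of I/J }`. -/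
noncomputable def fdepthQ (I J : Ideal (MvPolynomial (Fin n) K)) : WithBot ℕ∞ :=
  ⨆ F : QPrimeFiltration I J, F.fdepth

/-- The graded maximal ideal `(x_1, …, x_n)`. -/
noncomputable def maxIdeal (n : ℕ) (K : Type) [Field K] : Ideal (MvPolynomial (Fin n) K) :=
  Ideal.span (Set.range (X : Fin n → MvPolynomial (Fin n) K))

/-- The depth of a module over `S = K[x_1,…,x_n]` with respect to the graded maximal
ideal: the maximal length of an `M`-regular sequence of elements of `(x_1,…,x_n)`. -/
noncomputable def moduleDepth (n : ℕ) (K : Type) [Field K] (M : Type)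
    [AddCommGroup M] [Module (MvPolynomial (Fin n) K) M] : ℕ :=
  sSup {r | ∃ rs : List (MvPolynomial (Fin n) K), rs.length = r ∧
    (∀ s ∈ rs, s ∈ maxIdeal n K) ∧ RingTheory.Sequence.IsRegular M rs}

/-- The `S`-module `I/J`. -/
abbrev QuotMod (I J : Ideal (MvPolynomial (Fin n) K)) :=
  ↥I ⧸ (Submodule.comap I.subtype J)

open Function

def stanleySet (u : Fin n →₀ ℕ) (Z : Finset (Fin n)) : Set (Fin n →₀ ℕ) :=
  {e | u ≤ e ∧ ∀ j ∉ Z, e j = u j}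

@[simp]
lemma stanleySet_univ (u : Fin n →₀ ℕ) : stanleySet u Finset.univ = Set.Ici u := by
  ext e
  simp [stanleySet]

lemma stanleySpace_eq_restrictSupport (u : Fin n →₀ ℕ) (Z : Finset (Fin n)) :
    stanleySpace K u Z = restrictSupport K (stanleySet u Z) :=
  (restrictSupport_eq_span K _).symm

lemma quotSpace_eq_restrictSupport (I J : Ideal (MvPolynomial (Fin n) K)) :
    quotSpace I J = restrictSupport K (expSet I J) :=
  (restrictSupport_eq_span K _).symm

lemma expSet_span_monomial_bot (s : Set (Fin n →₀ ℕ)) :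
    expSet (Ideal.span ((fun a => (monomial a (1 : K) : MvPolynomial (Fin n) K)) '' s)) ⊥ =
      upperClosure s := by
  ext e
  simp [expSet, mem_ideal_span_monomial_image]

section restrictSupport

variable {σ R : Type*} [CommSemiring R]

lemma restrictSupport_iUnion {ι : Sort*} (s : ι → Set (σ →₀ ℕ)) :
    restrictSupport R (⋃ i, s i) = ⨆ i, restrictSupport R (s i) := by
  simp only [restrictSupport_eq_span, Set.image_iUnion, Submodule.span_iUnion]

variable [Nontrivial R]

lemma restrictSupport_injective :
    Injective (restrictSupport R : Set (σ →₀ ℕ) → Submodule R (MvPolynomial σ R)) := by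
  intro s t h
  ext e
  simpa using congr(monomial e (1 : R) ∈ $h)

lemma disjoint_restrictSupport_iff {s t : Set (σ →₀ ℕ)} :
    Disjoint (restrictSupport R s) (restrictSupport R t) ↔ Disjoint s t := by
  refine ⟨fun h => Set.disjoint_left.2 fun e hs ht => ?_, fun h => ?_⟩
  · have := Submodule.disjoint_def.1 h (monomial e (1 : R))
      ((monomial_mem_restrictSupport R).2 (Or.inl hs))
      ((monomial_mem_restrictSupport R).2 (Or.inl ht))
    simp at this
  · refine Submodule.disjoint_def.2 fun p hs ht => ?_
    rw [mem_restrictSupport_iff] at hs ht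
    have := disjoint_self.1 (h.mono hs ht)
    simpa using this

lemma iSupIndep_restrictSupport_iff {ι : Type*} {s : ι → Set (σ →₀ ℕ)} :
    iSupIndep (fun i => restrictSupport R (s i)) ↔ Pairwise (Disjoint on s) := by
  refine ⟨fun h i j hij => disjoint_restrictSupport_iff.1 (h.pairwiseDisjoint hij), fun h => ?_⟩
  refine iSupIndep_def.2 fun i => ?_
  simp only [← restrictSupport_iUnion, disjoint_restrictSupport_iff, Set.disjoint_iUnion_right]
  exact fun j hj => h hj.symm

end restrictSupport

def IsStanleyPartition {ι : Type} (u : ι → Fin n →₀ ℕ) (Z : ι → Finset (Fin n))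
    (E : Set (Fin n →₀ ℕ)) : Prop :=
  Pairwise (Disjoint on fun i => stanleySet (u i) (Z i)) ∧ ⋃ i, stanleySet (u i) (Z i) = E

lemma isStanleyDecompOf_iff {I J : Ideal (MvPolynomial (Fin n) K)} {ι : Type}
    (u : ι → Fin n →₀ ℕ) (Z : ι → Finset (Fin n)) :
    IsStanleyDecompOf I J u Z ↔ IsStanleyPartition u Z (expSet I J) := by
  simp only [IsStanleyDecompOf, IsStanleyPartition, stanleySpace_eq_restrictSupport,
    quotSpace_eq_restrictSupport, ← restrictSupport_iUnion, iSupIndep_restrictSupport_iff,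
    restrictSupport_injective.eq_iff]
  exact and_iff_right fun i => (basisMonomials (Fin n) K).linearIndependent.comp
    (fun e : {e : Fin n →₀ ℕ // ∀ j ∉ Z i, e j = 0} => u i + e)
    fun e f h => Subtype.ext (add_left_cancel h)

def HasStanleyPartition (d : ℕ) (E : Set (Fin n →₀ ℕ)) : Prop :=
  ∃ (ι : Type) (_ : Fintype ι) (u : ι → Fin n →₀ ℕ) (Z : ι → Finset (Fin n)),
    IsStanleyPartition u Z E ∧ ∀ i, d ≤ (Z i).card

namespace HasStanleyPartition

variable {d : ℕ} {E F : Set (Fin n →₀ ℕ)}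

lemma mono (h : HasStanleyPartition d E) {d' : ℕ} (hd : d' ≤ d) : HasStanleyPartition d' E := by
  obtain ⟨ι, _, u, Z, hP, hZ⟩ := h
  exact ⟨ι, inferInstance, u, Z, hP, fun i => hd.trans (hZ i)⟩

lemma union (hE : HasStanleyPartition d E) (hF : HasStanleyPartition d F) (h : Disjoint E F) :
    HasStanleyPartition d (E ∪ F) := by
  obtain ⟨ι, _, u, Z, ⟨hdisj, rfl⟩, hZ⟩ := hE
  obtain ⟨ι', _, u', Z', ⟨hdisj', rfl⟩, hZ'⟩ := hF
  refine ⟨ι ⊕ ι', inferInstance, Sum.elim u u', Sum.elim Z Z', ⟨?_, ?_⟩, Sum.forall.2 ⟨hZ, hZ'⟩⟩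
  · rintro (i | i) (j | j) hij
    · exact hdisj fun h => hij (congrArg _ h)
    · exact h.mono (Set.subset_iUnion_of_subset i subset_rfl)
        (Set.subset_iUnion_of_subset j subset_rfl)
    · exact h.symm.mono (Set.subset_iUnion_of_subset i subset_rfl)
        (Set.subset_iUnion_of_subset j subset_rfl)
    · exact hdisj' fun h => hij (congrArg _ h)
  · simp [Set.iUnion_sum]

lemma exists_stanleyDec {I J : Ideal (MvPolynomial (Fin n) K)}
    (h : HasStanleyPartition d (expSet I J)) (hne : (expSet I J).Nonempty) :
    ∃ D : StanleyDec I J, d ≤ D.sdepth := by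
  obtain ⟨ι, _, u, Z, ⟨hdisj, hcov⟩, hZ⟩ := h
  let e := (Fintype.equivFin ι).symm
  refine ⟨⟨Fintype.card ι, u ∘ e, Z ∘ e, (isStanleyDecompOf_iff _ _).2
    ⟨hdisj.comp_of_injective e.injective, ?_⟩⟩, ?_⟩
  · rw [← hcov]
    exact e.iSup_comp (g := fun i => stanleySet (u i) (Z i))
  · obtain ⟨x, hx⟩ := hne
    obtain ⟨i, -⟩ := Set.mem_iUnion.1 (hcov ▸ hx)
    refine le_csInf ⟨_, e.symm i, rfl⟩ ?_
    rintro _ ⟨k, rfl⟩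
    exact hZ _

end HasStanleyPartition

lemma hasStanleyPartition_Ici (u : Fin n →₀ ℕ) : HasStanleyPartition n (Set.Ici u) :=
  ⟨Unit, inferInstance, fun _ => u, fun _ => Finset.univ,
    ⟨fun i j hij => (hij rfl).elim, by simp [Set.iUnion_const]⟩, by simp⟩

noncomputable def stripCorner (q p : Fin n →₀ ℕ) (j : Fin n) (t : ℕ) : Fin n →₀ ℕ :=
  Finsupp.equivFunOnFinite.symm fun i => if i = j then t else if i < j then max (q i) (p i) else q i

lemma mem_stanleySet_stripCorner {q p e : Fin n →₀ ℕ} {j : Fin n} {t : ℕ} (hqt : q j ≤ t) :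
    e ∈ stanleySet (stripCorner q p j t) (Finset.univ.erase j) ↔
      q ≤ e ∧ e j = t ∧ ∀ i < j, p i ≤ e i := by
  simp only [stanleySet, stripCorner, Finsupp.le_def, Finset.mem_erase, Finset.mem_univ,
    and_true, not_not, forall_eq, Set.mem_ofPred_eq, Finsupp.coe_equivFunOnFinite_symm, if_true]
  constructor
  · rintro ⟨hle, hej⟩
    refine ⟨fun i => ?_, hej, fun i hi => ?_⟩
    · have := hle i
      split_ifs at this with h1 h2
      · subst h1; omega
      · exact (max_le_iff.1 this).1
      · exact this
    · have := hle i
      rw [if_neg hi.ne, if_pos hi] at this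
      exact (max_le_iff.1 this).2
  · rintro ⟨hq, hej, hp⟩
    refine ⟨fun i => ?_, hej⟩
    split_ifs with h1 h2
    · subst h1; omega
    · exact max_le (hq i) (hp i h2)
    · exact hq i

lemma hasStanleyPartition_Ici_diff_Ici {q p : Fin n →₀ ℕ} (hqp : Disjoint q.support p.support) :
    HasStanleyPartition (n - 1) (Set.Ici q \ Set.Ici p) := by
  have hq : ∀ j, p j ≠ 0 → q j = 0 := fun j hj => by_contra fun h =>
    Finset.disjoint_left.1 hqp (Finsupp.mem_support_iff.2 h) (Finsupp.mem_support_iff.2 hj)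
  have hmem (j : Fin n) (t : Fin (p j)) (e : Fin n →₀ ℕ) :
      e ∈ stanleySet (stripCorner q p j t) (Finset.univ.erase j) ↔
        q ≤ e ∧ e j = t ∧ ∀ i < j, p i ≤ e i :=
    mem_stanleySet_stripCorner (by rw [hq j t.pos.ne']; exact Nat.zero_le _)
  refine ⟨Σ j, Fin (p j), inferInstance, fun x => stripCorner q p x.1 x.2,
    fun x => Finset.univ.erase x.1, ⟨?_, ?_⟩, fun x => by simp⟩
  · rintro ⟨j, t⟩ ⟨j', t'⟩ hne
    refine Set.disjoint_left.2 fun e he he' => hne ?_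
    obtain ⟨-, hej, hpj⟩ := (hmem j t e).1 he
    obtain ⟨-, hej', hpj'⟩ := (hmem j' t' e).1 he'
    obtain hlt | rfl | hlt := lt_trichotomy j j'
    · have := hpj' j hlt
      omega
    · exact Sigma.ext rfl (heq_of_eq (Fin.ext (hej.symm.trans hej')))
    · have := hpj j' hlt
      omega
  · ext e
    simp only [Set.mem_iUnion, hmem, Set.mem_sdiff, Set.mem_Ici, Sigma.exists]
    constructor
    · rintro ⟨j, t, hqe, hej, -⟩
      exact ⟨hqe, fun hpe => (hpe j).not_gt (hej ▸ t.isLt)⟩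
    · rintro ⟨hqe, hpe⟩
      -- `e` lies in the strip indexed by the first `j` with `e j < p j` and by `t = e j`.
      obtain ⟨j, hj, hmin⟩ := wellFounded_lt.has_min {i | e i < p i}
        (by simpa [Finsupp.le_def] using hpe : ∃ i, e i < p i)
      exact ⟨j, ⟨e j, hj⟩, hqe, rfl, fun i hi => not_lt.1 fun h => hmin i h hi⟩

lemma hasStanleyPartition_Ici_union_Ici_union_Ici {a b c : Fin n →₀ ℕ}
    (hab : Disjoint a.support b.support) (hac : Disjoint a.support c.support)
    (hbc : Disjoint b.support c.support) :
    HasStanleyPartition (n - 1) (Set.Ici a ∪ Set.Ici b ∪ Set.Ici c) := by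
  have hsplit : Set.Ici a ∪ Set.Ici b ∪ Set.Ici c = Set.Ici (a ⊔ b ⊔ c) ∪
      (Set.Ici a \ Set.Ici c) ∪ (Set.Ici b \ Set.Ici a) ∪ (Set.Ici c \ Set.Ici b) := by
    ext e
    simp only [Set.mem_union, Set.mem_sdiff, Set.mem_Ici, sup_le_iff]
    tauto
  rw [hsplit]
  refine ((((hasStanleyPartition_Ici _).mono (Nat.sub_le n 1)).union
    (hasStanleyPartition_Ici_diff_Ici hac) ?_).union
    (hasStanleyPartition_Ici_diff_Ici hab.symm) ?_).union
    (hasStanleyPartition_Ici_diff_Ici hbc.symm) ?_ <;>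
  · simp only [Set.disjoint_left, Set.mem_union, Set.mem_sdiff, Set.mem_Ici, sup_le_iff]
    tauto

lemma StanleyDec.exists_le_of_le_sdepth {I J : Ideal (MvPolynomial (Fin n) K)}
    (D : StanleyDec I J) (hD : n ≤ D.sdepth) {a b : Fin n →₀ ℕ}
    (ha : a ∈ expSet I J) (hb : b ∈ expSet I J) : ∃ u ∈ expSet I J, u ≤ a ∧ u ≤ b := by
  obtain ⟨hdisj, hcov⟩ := (isStanleyDecompOf_iff D.u D.Z).1 D.isDecomp
  have hZ (i : Fin D.m) : D.Z i = Finset.univ := Finset.eq_univ_of_card _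
    ((Finset.card_le_univ _).antisymm (by simpa using hD.trans (Nat.sInf_le ⟨i, rfl⟩)))
  simp only [hZ, stanleySet_univ] at hdisj hcov
  rw [← hcov] at ha hb ⊢
  obtain ⟨i, hi⟩ := Set.mem_iUnion.1 ha
  obtain ⟨j, hj⟩ := Set.mem_iUnion.1 hb
  -- `a ⊔ b` lies in both cones, so they are the same one.
  obtain rfl : i = j := by_contra fun hij => Set.disjoint_left.1 (hdisj hij)
    (le_sup_of_le_left hi : D.u i ≤ a ⊔ b) (le_sup_of_le_right hj : D.u j ≤ a ⊔ b)
  exact ⟨D.u i, Set.mem_iUnion.2 ⟨i, Set.self_mem_Ici⟩, hi, hj⟩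

lemma StanleyDec.sdepth_le_sub_one_of_expSet_eq {I J : Ideal (MvPolynomial (Fin n) K)}
    (D : StanleyDec I J) {a b c : Fin n →₀ ℕ} (hM : expSet I J = Set.Ici a ∪ Set.Ici b ∪ Set.Ici c)
    (ha : a ≠ 0) (hb : b ≠ 0) (hc : c ≠ 0) (hab : Disjoint a.support b.support) :
    D.sdepth ≤ n - 1 := by
  by_contra! hD
  obtain ⟨u, hu, hua, hub⟩ := D.exists_le_of_le_sdepth (a := a) (b := b) (by omega)
    (by simp [hM]) (by simp [hM])
  obtain rfl : u = 0 := le_bot_iff.1 (Finsupp.disjoint_iff.2 hab hua hub)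
  simp [hM, ha, hb, hc] at hu

/-- **Proposition.** A monomial complete intersection `I ⊆ K[x_1,…,x_n]` minimally
generated by three monomials (three pairwise coprime monomials) satisfies
`sdepth I = n - 1`. -/
theorem sdepth_of_three_generated_complete_intersection
    {n : ℕ} {K : Type} [Field K] (a b c : Fin n →₀ ℕ)
    (ha : a ≠ 0) (hb : b ≠ 0) (hc : c ≠ 0)
    (hab : Disjoint a.support b.support) (hac : Disjoint a.support c.support)
    (hbc : Disjoint b.support c.support)
    (I : Ideal (MvPolynomial (Fin n) K))
    (hI : I = Ideal.span {(monomial a (1 : K) : MvPolynomial (Fin n) K),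
      (monomial b (1 : K) : MvPolynomial (Fin n) K),
      (monomial c (1 : K) : MvPolynomial (Fin n) K)}) :
    sdepthQ I (⊥ : Ideal (MvPolynomial (Fin n) K)) = n - 1 := by
  have hM : expSet I ⊥ = Set.Ici a ∪ Set.Ici b ∪ Set.Ici c := by
    rw [hI, show ({monomial a 1, monomial b 1, monomial c 1} : Set (MvPolynomial (Fin n) K)) =
      (fun e => monomial e (1 : K)) '' {a, b, c} by simp [Set.image_insert_eq],
      expSet_span_monomial_bot]
    ext e
    simp [or_assoc]
  have hpart : HasStanleyPartition (n - 1) (expSet I ⊥) := by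
    rw [hM]
    exact hasStanleyPartition_Ici_union_Ici_union_Ici hab hac hbc
  obtain ⟨D, hD⟩ := hpart.exists_stanleyDec ⟨a, by simp [hM]⟩
  have hle (D' : StanleyDec I ⊥) : D'.sdepth ≤ n - 1 :=
    D'.sdepth_le_sub_one_of_expSet_eq hM ha hb hc hab
  exact IsGreatest.csSup_eq ⟨⟨D, ((hle D).antisymm hD).symm⟩, by rintro _ ⟨D', rfl⟩; exact hle D'⟩

end StanleyPaper
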